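/- Soundness of the calculus DFD: every formula derivable in the proof system DFD is true at every state of every general relational model of DFD; likewise, every formula derivable in the restricted system DFD^{≠∅} is true at every state of every general relational model of DFD^{≠∅}. -/

import Mathlib

/-- Terms of DFD: `x ::= v | ○x`. -/
inductive Tm (V : Type) : Type where
  | base : V → Tm V
  | next : Tm V → Tm V
deriving DecidableEq

namespace Tm

variable {V : Type}

/-- The set of terms `○X := {○x : x ∈ X}`. -/
def nextSet [DecidableEq V] (X : Finset (Tm V)) : Finset (Tm V) := X.image Tm.next

/-- The number of `○`'s in a term. -/
def depth : Tm V → ℕ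
  | .base _ => 0
  | .next x => x.depth + 1

/-- The basic variable underlying a term. -/
def baseVar : Tm V → V
  | .base v => v
  | .next x => x.baseVar

/-- The term `○ⁿ x`. -/
def iter : ℕ → Tm V → Tm V
  | 0, x => x
  | n + 1, x => .next (iter n x)

/-- The set of terms `○ⁿ X`. -/
def iterSet [DecidableEq V] : ℕ → Finset (Tm V) → Finset (Tm V)
  | 0, X => X
  | n + 1, X => nextSet (iterSet n X)

end Tm

/-- Formulas of the language `L` of DFD, for the vocabulary `(V, Pred, ar)`. -/
inductive Fm (V Pred : Type) (ar : Pred → ℕ) : Type where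
  | atom : (P : Pred) → (Fin (ar P) → Tm V) → Fm V Pred ar
  | neg : Fm V Pred ar → Fm V Pred ar
  | and : Fm V Pred ar → Fm V Pred ar → Fm V Pred ar
  | next : Fm V Pred ar → Fm V Pred ar
  | dquant : Finset (Tm V) → Fm V Pred ar → Fm V Pred ar
  | datom : Finset (Tm V) → Tm V → Fm V Pred ar

namespace Fm

variable {V Pred : Type} {ar : Pred → ℕ}

/-- Material implication, defined from `¬` and `∧`. -/
def imp (φ ψ : Fm V Pred ar) : Fm V Pred ar := .neg (.and φ (.neg ψ))

/-- Material biconditional. -/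
def iff (φ ψ : Fm V Pred ar) : Fm V Pred ar := .and (φ.imp ψ) (ψ.imp φ)

/-- The formula `○ⁿ φ`. -/
def iterNext : ℕ → Fm V Pred ar → Fm V Pred ar
  | 0, φ => φ
  | n + 1, φ => .next (iterNext n φ)

/-- Boolean evaluation of a formula under a valuation of formulas; formulas that are not
negations or conjunctions are treated as propositional atoms. -/
def boolEval (v : Fm V Pred ar → Bool) : Fm V Pred ar → Bool
  | .neg φ => !(boolEval v φ)
  | .and φ ψ => boolEval v φ && boolEval v ψ
  | φ => v φ

/-- Classical propositional tautologies. -/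
def Taut (φ : Fm V Pred ar) : Prop := ∀ v, boolEval v φ = true

/-- A fixed trivially valid formula `D_{{v₀}} v₀`, used as the empty conjunction. -/
def vtop [Inhabited V] : Fm V Pred ar := .datom {Tm.base default} (Tm.base default)

/-- Conjunction of a list of formulas. -/
def bigAnd [Inhabited V] : List (Fm V Pred ar) → Fm V Pred ar
  | [] => vtop
  | φ :: l => l.foldl Fm.and φ

/-- The formula `D_X Y`: the conjunction of `D_X y` over `y ∈ Y`. -/
noncomputable def depF [Inhabited V] (X Y : Finset (Tm V)) : Fm V Pred ar :=
  bigAnd (Y.toList.map (Fm.datom X))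

/-- Membership in the fragment `L^{≠∅}`: every index set of a dependence quantifier or
dependence atom is non-empty. -/
def neIdx : Fm V Pred ar → Prop
  | .atom _ _ => True
  | .neg φ => φ.neIdx
  | .and φ ψ => φ.neIdx ∧ ψ.neIdx
  | .next φ => φ.neIdx
  | .dquant X φ => X.Nonempty ∧ φ.neIdx
  | .datom X _ => X.Nonempty

end Fm

/-- The set `V = {v₁, …, v_N}` of all basic variables, as a set of terms. -/
def fullV (V : Type) [Fintype V] [DecidableEq V] : Finset (Tm V) :=
  (Finset.univ : Finset V).image Tm.base
section Calculus

variable {V Pred : Type} [DecidableEq V] [Fintype V] [Inhabited V] {ar : Pred → ℕ}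

/-- The axioms of the Hilbert system DFD, apart from classical propositional tautologies and
the axiom `𝖣-○` (`𝖣_∅ φ → ○φ`). -/
inductive DFDAxiom : Fm V Pred ar → Prop where
  | oDist (φ ψ : Fm V Pred ar) :
      DFDAxiom ((Fm.next (φ.imp ψ)).imp ((Fm.next φ).imp (Fm.next ψ)))
  | funct (φ : Fm V Pred ar) :
      DFDAxiom ((Fm.next φ.neg).iff (Fm.next φ).neg)
  | dDist (X : Finset (Tm V)) (φ ψ : Fm V Pred ar) :
      DFDAxiom ((Fm.dquant X (φ.imp ψ)).imp ((Fm.dquant X φ).imp (Fm.dquant X ψ)))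
  | dIntro1 (P : Pred) (args : Fin (ar P) → Tm V) :
      DFDAxiom ((Fm.atom P args).imp (Fm.dquant (Finset.image args Finset.univ) (Fm.atom P args)))
  | dIntro2 (X : Finset (Tm V)) (y : Tm V) :
      DFDAxiom ((Fm.datom X y).imp (Fm.dquant X (Fm.datom X y)))
  | dT (X : Finset (Tm V)) (φ : Fm V Pred ar) :
      DFDAxiom ((Fm.dquant X φ).imp φ)
  | d4 (X : Finset (Tm V)) (φ : Fm V Pred ar) :
      DFDAxiom ((Fm.dquant X φ).imp (Fm.dquant X (Fm.dquant X φ)))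
  | d5 (X : Finset (Tm V)) (φ : Fm V Pred ar) :
      DFDAxiom ((Fm.dquant X φ).neg.imp (Fm.dquant X (Fm.dquant X φ).neg))
  | depRef (X : Finset (Tm V)) (x : Tm V) (h : x ∈ X) :
      DFDAxiom (Fm.datom X x)
  | depTrans (X Y Z : Finset (Tm V)) :
      DFDAxiom (((Fm.depF X Y).and (Fm.depF Y Z)).imp (Fm.depF X Z))
  | determinism (v : V) :
      DFDAxiom (Fm.datom (fullV V) (Tm.next (Tm.base v)))
  | transfer (X Y : Finset (Tm V)) (φ : Fm V Pred ar) :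
      DFDAxiom (((Fm.depF X Y).and (Fm.dquant Y φ)).imp (Fm.dquant X φ))
  | atomicRed (P : Pred) (args : Fin (ar P) → Tm V) :
      DFDAxiom ((Fm.next (Fm.atom P args)).iff (Fm.atom P fun i => Tm.next (args i)))
  | nextTime1 (X : Finset (Tm V)) (φ : Fm V Pred ar) :
      DFDAxiom ((Fm.next (Fm.dquant X φ)).imp (Fm.dquant (Tm.nextSet X) (Fm.next φ)))
  | nextTime2 (X : Finset (Tm V)) (y : Tm V) :
      DFDAxiom ((Fm.next (Fm.datom X y)).imp (Fm.datom (Tm.nextSet X) (Tm.next y)))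

/-- Derivability in the Hilbert system DFD. -/
inductive DFDDeriv : Fm V Pred ar → Prop where
  | ax {φ : Fm V Pred ar} : DFDAxiom φ → DFDDeriv φ
  | dO (φ : Fm V Pred ar) : DFDDeriv ((Fm.dquant ∅ φ).imp (Fm.next φ))
  | taut {φ : Fm V Pred ar} : Fm.Taut φ → DFDDeriv φ
  | mp {φ ψ : Fm V Pred ar} : DFDDeriv (φ.imp ψ) → DFDDeriv φ → DFDDeriv ψ
  | dNec (X : Finset (Tm V)) {φ : Fm V Pred ar} : DFDDeriv φ → DFDDeriv (Fm.dquant X φ)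

/-- Derivability in the restricted Hilbert system DFD^{≠∅}: the calculus is restricted to the
fragment `L^{≠∅}`, the axiom `𝖣-○` is dropped, and the rule of `○`-necessitation is added. -/
inductive DFDDerivNE : Fm V Pred ar → Prop where
  | ax {φ : Fm V Pred ar} : DFDAxiom φ → φ.neIdx → DFDDerivNE φ
  | taut {φ : Fm V Pred ar} : Fm.Taut φ → φ.neIdx → DFDDerivNE φ
  | mp {φ ψ : Fm V Pred ar} : DFDDerivNE (φ.imp ψ) → DFDDerivNE φ → DFDDerivNE ψ
  | dNec (X : Finset (Tm V)) {φ : Fm V Pred ar} :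
      X.Nonempty → DFDDerivNE φ → DFDDerivNE (Fm.dquant X φ)
  | oNec {φ : Fm V Pred ar} : DFDDerivNE φ → DFDDerivNE (Fm.next φ)

end Calculus
/-- The underlying frame of a general relational model: a set of worlds, a transition
function, a binary relation `=_X` for each finite set of terms `X`, and a valuation for
predicate atoms and dependence atoms. -/
structure GRKripke (V Pred : Type) (ar : Pred → ℕ) where
  W : Type
  nonempty : Nonempty W
  g : W → W
  eq : Finset (Tm V) → W → W → Prop
  valAtom : (P : Pred) → (Fin (ar P) → Tm V) → W → Prop
  valDep : Finset (Tm V) → Tm V → W → Prop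

variable {V Pred : Type} {ar : Pred → ℕ}

/-- Truth of a formula at a state of a general relational model. -/
def GRKripke.sat (M : GRKripke V Pred ar) : Fm V Pred ar → M.W → Prop
  | .atom P args, s => M.valAtom P args s
  | .neg φ, s => ¬ M.sat φ s
  | .and φ ψ, s => M.sat φ s ∧ M.sat ψ s
  | .next φ, s => M.sat φ (M.g s)
  | .dquant X φ, s => ∀ t, M.eq X s t → M.sat φ t
  | .datom X y, s => M.valDep X y s

/-- General relational models of the logic DFD (conditions C1–C8). -/
structure GRModel (V Pred : Type) [DecidableEq V] [Fintype V] (ar : Pred → ℕ)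
    extends GRKripke V Pred ar where
  C1 : ∀ s w, eq ∅ s w
  C2 : ∀ X : Finset (Tm V), Equivalence (eq X)
  C3ref : ∀ (X : Finset (Tm V)) (x : Tm V), x ∈ X → ∀ s, valDep X x s
  C3trans : ∀ (X Y Z : Finset (Tm V)) (s : W), (∀ y ∈ Y, valDep X y s) →
      (∀ z ∈ Z, valDep Y z s) → ∀ z ∈ Z, valDep X z s
  C3det : ∀ (x : Tm V) (s : W), valDep (fullV V) (Tm.next x) s
  C4 : ∀ (X Y : Finset (Tm V)) (s w : W), eq X s w → (∀ y ∈ Y, valDep X y s) →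
      (∀ y ∈ Y, valDep X y w) ∧ eq Y s w
  C5 : ∀ (P : Pred) (args : Fin (ar P) → Tm V) (X : Finset (Tm V)) (s w : W),
      eq X s w → (∀ i, args i ∈ X) → valAtom P args s → valAtom P args w
  C6 : ∀ (P : Pred) (args : Fin (ar P) → Tm V) (s : W),
      valAtom P (fun i => Tm.next (args i)) s ↔ valAtom P args (g s)
  C7 : ∀ (X : Finset (Tm V)) (s w : W), eq (Tm.nextSet X) s w → eq X (g s) (g w)
  C8 : ∀ (X Y : Finset (Tm V)) (s : W), (∀ y ∈ Y, valDep X y (g s)) →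
      ∀ y ∈ Tm.nextSet Y, valDep (Tm.nextSet X) y s

/-- General relational models of the logic DFD^{≠∅}: the relations `=_X` and conditions are
only required for non-empty `X`, and condition C1 is dropped. -/
structure GRModelNE (V Pred : Type) [DecidableEq V] [Fintype V] (ar : Pred → ℕ)
    extends GRKripke V Pred ar where
  C2 : ∀ X : Finset (Tm V), X.Nonempty → Equivalence (eq X)
  C3ref : ∀ (X : Finset (Tm V)) (x : Tm V), x ∈ X → ∀ s, valDep X x s
  C3trans : ∀ (X Y Z : Finset (Tm V)) (s : W), X.Nonempty → Y.Nonempty →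
      (∀ y ∈ Y, valDep X y s) → (∀ z ∈ Z, valDep Y z s) → ∀ z ∈ Z, valDep X z s
  C3det : ∀ (x : Tm V) (s : W), valDep (fullV V) (Tm.next x) s
  C4 : ∀ (X Y : Finset (Tm V)) (s w : W), X.Nonempty → Y.Nonempty →
      eq X s w → (∀ y ∈ Y, valDep X y s) → (∀ y ∈ Y, valDep X y w) ∧ eq Y s w
  C5 : ∀ (P : Pred) (args : Fin (ar P) → Tm V) (X : Finset (Tm V)) (s w : W), X.Nonempty →
      eq X s w → (∀ i, args i ∈ X) → valAtom P args s → valAtom P args w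
  C6 : ∀ (P : Pred) (args : Fin (ar P) → Tm V) (s : W),
      valAtom P (fun i => Tm.next (args i)) s ↔ valAtom P args (g s)
  C7 : ∀ (X : Finset (Tm V)) (s w : W), X.Nonempty →
      eq (Tm.nextSet X) s w → eq X (g s) (g w)
  C8 : ∀ (X Y : Finset (Tm V)) (s : W), X.Nonempty → (∀ y ∈ Y, valDep X y (g s)) →
      ∀ y ∈ Tm.nextSet Y, valDep (Tm.nextSet X) y s

/-!
Soundness is proved by induction on derivations, each axiom being valid because of the frame
condition it corresponds to: `𝖣-T`, `𝖣-4` and `𝖣-5` because `=_X` is an equivalence (C2), the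
`𝖣`-introduction axioms and Transfer by C4 and C5, Dependence Reflexivity, Transitivity and
Determinism by C3, Atomic Reduction by C6, the Next-Time axioms by C7 and C8, and `𝖣-○` by C1.
In DFD^{≠∅} the conditions hold only for non-empty index sets, and membership of the axiom in
`L^{≠∅}` supplies exactly the non-emptiness each of them needs.
-/

theorem Fm.bigAnd_iff [Inhabited V] {p : Fm V Pred ar → Prop}
    (hand : ∀ φ ψ, p (φ.and ψ) ↔ p φ ∧ p ψ) (htop : p Fm.vtop) (l : List (Fm V Pred ar)) :
    p (Fm.bigAnd l) ↔ ∀ ψ ∈ l, p ψ := by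
  have foldl_iff : ∀ (l : List (Fm V Pred ar)) φ, p (l.foldl Fm.and φ) ↔ p φ ∧ ∀ ψ ∈ l, p ψ := by
    intro l
    induction l with
    | nil => simp
    | cons a l ih => intro φ; simp only [List.foldl_cons, ih, hand, List.forall_mem_cons, and_assoc]
  cases l with
  | nil => simp [Fm.bigAnd, htop]
  | cons a l => simp [Fm.bigAnd, foldl_iff]

theorem Fm.depF_iff [Inhabited V] {p : Fm V Pred ar → Prop}
    (hand : ∀ φ ψ, p (φ.and ψ) ↔ p φ ∧ p ψ) (htop : p Fm.vtop) (X Y : Finset (Tm V)) :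
    p (Fm.depF X Y) ↔ ∀ y ∈ Y, p (Fm.datom X y) := by
  simp [Fm.depF, Fm.bigAnd_iff hand htop]

theorem Fm.neIdx_depF_iff [Inhabited V] (X Y : Finset (Tm V)) :
    (Fm.depF X Y : Fm V Pred ar).neIdx ↔ (Y.Nonempty → X.Nonempty) := by
  rw [Fm.depF_iff (p := Fm.neIdx) (fun _ _ => Iff.rfl) (Finset.singleton_nonempty _)]
  exact ⟨fun h ⟨y, hy⟩ => h y hy, fun h y hy => h ⟨y, hy⟩⟩

namespace GRKripke

variable (M : GRKripke V Pred ar)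

@[simp]
theorem sat_imp (φ ψ : Fm V Pred ar) (s : M.W) :
    M.sat (φ.imp ψ) s ↔ (M.sat φ s → M.sat ψ s) := by
  simp only [Fm.imp, sat]; tauto

@[simp]
theorem sat_iff (φ ψ : Fm V Pred ar) (s : M.W) :
    M.sat (φ.iff ψ) s ↔ (M.sat φ s ↔ M.sat ψ s) := by
  simp only [Fm.iff, sat, sat_imp]; tauto

open scoped Classical in
theorem boolEval_decide_sat_iff (s : M.W) (φ : Fm V Pred ar) :
    φ.boolEval (fun χ => decide (M.sat χ s)) = true ↔ M.sat φ s := by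
  induction φ with
  | neg φ ih => simp [Fm.boolEval, sat, ← ih]
  | and φ ψ ih₁ ih₂ => simp [Fm.boolEval, sat, ih₁, ih₂]
  | _ => exact decide_eq_true_iff

theorem sat_of_taut {φ : Fm V Pred ar} (h : φ.Taut) (s : M.W) : M.sat φ s := by
  classical
  exact (boolEval_decide_sat_iff M s φ).1 (h _)

theorem sat_depF [Inhabited V] {s : M.W} (htop : M.valDep {Tm.base default} (Tm.base default) s)
    (X Y : Finset (Tm V)) : M.sat (Fm.depF X Y) s ↔ ∀ y ∈ Y, M.valDep X y s :=
  Fm.depF_iff (p := (M.sat · s)) (fun _ _ => Iff.rfl) htop X Y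

variable {M} {s : M.W}

theorem sat_next_imp_distrib (φ ψ : Fm V Pred ar) :
    M.sat ((Fm.next (φ.imp ψ)).imp ((Fm.next φ).imp (Fm.next ψ))) s := by
  simp only [sat_imp, sat]; exact id

theorem sat_next_neg_iff (φ : Fm V Pred ar) : M.sat ((Fm.next φ.neg).iff (Fm.next φ).neg) s := by
  simp [sat]

theorem sat_dquant_imp_distrib (X : Finset (Tm V)) (φ ψ : Fm V Pred ar) :
    M.sat ((Fm.dquant X (φ.imp ψ)).imp ((Fm.dquant X φ).imp (Fm.dquant X ψ))) s := by
  simp only [sat_imp, sat]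
  exact fun himp h t hst => himp t hst (h t hst)

theorem sat_atom_imp_dquant [DecidableEq V] {P : Pred} {args : Fin (ar P) → Tm V}
    (hC5 : ∀ t, M.eq (Finset.image args Finset.univ) s t →
      (∀ i, args i ∈ Finset.image args Finset.univ) → M.valAtom P args s → M.valAtom P args t) :
    M.sat ((Fm.atom P args).imp
      (Fm.dquant (Finset.image args Finset.univ) (Fm.atom P args))) s := by
  simp only [sat_imp, sat]
  exact fun h t hst => hC5 t hst (fun i => Finset.mem_image_of_mem args (Finset.mem_univ i)) h

theorem sat_datom_imp_dquant [DecidableEq V] {X : Finset (Tm V)} {y : Tm V}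
    (hC4 : ∀ t, M.eq X s t → (∀ y' ∈ ({y} : Finset (Tm V)), M.valDep X y' s) →
      (∀ y' ∈ ({y} : Finset (Tm V)), M.valDep X y' t) ∧ M.eq {y} s t) :
    M.sat ((Fm.datom X y).imp (Fm.dquant X (Fm.datom X y))) s := by
  simp only [sat_imp, sat]
  exact fun h t hst => (hC4 t hst (by simpa using h)).1 y (Finset.mem_singleton_self y)

theorem sat_dquant_imp_self {X : Finset (Tm V)} (hX : Equivalence (M.eq X)) (φ : Fm V Pred ar) :
    M.sat ((Fm.dquant X φ).imp φ) s := by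
  simp only [sat_imp, sat]
  exact fun h => h s (hX.refl s)

theorem sat_dquant_imp_dquant_dquant {X : Finset (Tm V)} (hX : Equivalence (M.eq X))
    (φ : Fm V Pred ar) : M.sat ((Fm.dquant X φ).imp (Fm.dquant X (Fm.dquant X φ))) s := by
  simp only [sat_imp, sat]
  exact fun h t hst u htu => h u (hX.trans hst htu)

theorem sat_not_dquant_imp_dquant_not_dquant {X : Finset (Tm V)} (hX : Equivalence (M.eq X))
    (φ : Fm V Pred ar) : M.sat ((Fm.dquant X φ).neg.imp (Fm.dquant X (Fm.dquant X φ).neg)) s := by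
  simp only [sat_imp, sat]
  exact fun h t hst ht => h fun u hsu => ht u (hX.trans (hX.symm hst) hsu)

theorem sat_depF_trans [Inhabited V] (htop : M.valDep {Tm.base default} (Tm.base default) s)
    {X Y Z : Finset (Tm V)}
    (hC3 : (∀ y ∈ Y, M.valDep X y s) → (∀ z ∈ Z, M.valDep Y z s) → ∀ z ∈ Z, M.valDep X z s) :
    M.sat (((Fm.depF X Y).and (Fm.depF Y Z)).imp (Fm.depF X Z)) s := by
  simp only [sat_imp, sat, sat_depF M htop]
  exact fun h => hC3 h.1 h.2

theorem sat_transfer [Inhabited V] (htop : M.valDep {Tm.base default} (Tm.base default) s)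
    {X Y : Finset (Tm V)} (hC4 : ∀ t, M.eq X s t → (∀ y ∈ Y, M.valDep X y s) → M.eq Y s t)
    (φ : Fm V Pred ar) :
    M.sat (((Fm.depF X Y).and (Fm.dquant Y φ)).imp (Fm.dquant X φ)) s := by
  simp only [sat_imp, sat, sat_depF M htop]
  exact fun h t hst => h.2 t (hC4 t hst h.1)

theorem sat_atomic_reduction {P : Pred} {args : Fin (ar P) → Tm V}
    (hC6 : M.valAtom P (fun i => Tm.next (args i)) s ↔ M.valAtom P args (M.g s)) :
    M.sat ((Fm.next (Fm.atom P args)).iff (Fm.atom P fun i => Tm.next (args i))) s := by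
  simpa [sat] using hC6.symm

theorem sat_next_dquant_imp [DecidableEq V] {X : Finset (Tm V)}
    (hC7 : ∀ t, M.eq (Tm.nextSet X) s t → M.eq X (M.g s) (M.g t)) (φ : Fm V Pred ar) :
    M.sat ((Fm.next (Fm.dquant X φ)).imp (Fm.dquant (Tm.nextSet X) (Fm.next φ))) s := by
  simp only [sat_imp, sat]
  exact fun h t hst => h (M.g t) (hC7 t hst)

theorem sat_next_datom_imp [DecidableEq V] {X : Finset (Tm V)} {y : Tm V}
    (hC8 : (∀ y' ∈ ({y} : Finset (Tm V)), M.valDep X y' (M.g s)) →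
      ∀ y' ∈ Tm.nextSet {y}, M.valDep (Tm.nextSet X) y' s) :
    M.sat ((Fm.next (Fm.datom X y)).imp (Fm.datom (Tm.nextSet X) (Tm.next y))) s := by
  simp only [sat_imp, sat]
  exact fun h => hC8 (by simpa using h) _ (by simp [Tm.nextSet])

end GRKripke

section Soundness

variable [DecidableEq V] [Fintype V] [Inhabited V]

open GRKripke

theorem GRModel.sat_of_axiom (M : GRModel V Pred ar) {φ : Fm V Pred ar} (h : DFDAxiom φ)
    (s : M.W) : M.sat φ s := by
  have htop := M.C3ref _ _ (Finset.mem_singleton_self (Tm.base default)) s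
  cases h with
  | oDist φ ψ => exact sat_next_imp_distrib φ ψ
  | funct φ => exact sat_next_neg_iff φ
  | dDist X φ ψ => exact sat_dquant_imp_distrib X φ ψ
  | dIntro1 P args => exact sat_atom_imp_dquant (M.C5 P args _ s)
  | dIntro2 X y => exact sat_datom_imp_dquant (M.C4 X {y} s)
  | dT X φ => exact sat_dquant_imp_self (M.C2 X) φ
  | d4 X φ => exact sat_dquant_imp_dquant_dquant (M.C2 X) φ
  | d5 X φ => exact sat_not_dquant_imp_dquant_not_dquant (M.C2 X) φ
  | depRef X x hx => exact M.C3ref X x hx s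
  | depTrans X Y Z => exact sat_depF_trans htop (M.C3trans X Y Z s)
  | determinism v => exact M.C3det (Tm.base v) s
  | transfer X Y φ => exact sat_transfer htop (fun t hst hXY => (M.C4 X Y s t hst hXY).2) φ
  | atomicRed P args => exact sat_atomic_reduction (M.C6 P args s)
  | nextTime1 X φ => exact sat_next_dquant_imp (M.C7 X s) φ
  | nextTime2 X y => exact sat_next_datom_imp (M.C8 X {y} s)

theorem GRModelNE.sat_of_axiom (M : GRModelNE V Pred ar) {φ : Fm V Pred ar} (h : DFDAxiom φ)
    (hφ : φ.neIdx) (s : M.W) : M.sat φ s := by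
  have htop := M.C3ref _ _ (Finset.mem_singleton_self (Tm.base default)) s
  cases h <;> simp only [Fm.imp, Fm.iff, Fm.neIdx, Fm.neIdx_depF_iff] at hφ
  case oDist φ ψ => exact sat_next_imp_distrib φ ψ
  case funct φ => exact sat_next_neg_iff φ
  case dDist X φ ψ => exact sat_dquant_imp_distrib X φ ψ
  case dIntro1 P args => exact sat_atom_imp_dquant (fun t => M.C5 P args _ s t hφ.2.1)
  case dIntro2 X y =>
    exact sat_datom_imp_dquant (M.C4 X {y} s · hφ.1 (Finset.singleton_nonempty y))
  case dT X φ => exact sat_dquant_imp_self (M.C2 X hφ.1.1) φ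
  case d4 X φ => exact sat_dquant_imp_dquant_dquant (M.C2 X hφ.1.1) φ
  case d5 X φ => exact sat_not_dquant_imp_dquant_not_dquant (M.C2 X hφ.1.1) φ
  case depRef X x hx => exact M.C3ref X x hx s
  case depTrans X Y Z =>
    refine sat_depF_trans htop fun hXY hYZ => ?_
    -- `D_Y ∅` is `vtop`, which lies in `L^{≠∅}` for every `Y`: only `Z ≠ ∅` forces `X, Y ≠ ∅`.
    rcases Z.eq_empty_or_nonempty with rfl | hZ
    · simp
    · exact M.C3trans X Y Z s (hφ.1.1 (hφ.1.2 hZ)) (hφ.1.2 hZ) hXY hYZ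
  case determinism v => exact M.C3det (Tm.base v) s
  case transfer X Y φ =>
    exact sat_transfer htop (fun t hst hXY => (M.C4 X Y s t hφ.2.1 hφ.1.2.1 hst hXY).2) φ
  case atomicRed P args => exact sat_atomic_reduction (M.C6 P args s)
  case nextTime1 X φ => exact sat_next_dquant_imp (fun t => M.C7 X s t hφ.1.1) φ
  case nextTime2 X y => exact sat_next_datom_imp (M.C8 X {y} s hφ.1)

theorem DFDDeriv.sat {φ : Fm V Pred ar} (h : DFDDeriv φ) (M : GRModel V Pred ar) (s : M.W) :
    M.sat φ s := by
  induction h generalizing s with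
  | ax h => exact M.sat_of_axiom h s
  | dO φ => exact (sat_imp _ _ _ _).2 fun h => h (M.g s) (M.C1 s (M.g s))
  | taut h => exact M.sat_of_taut h s
  | mp _ _ ihimp ih => exact (sat_imp _ _ _ _).1 (ihimp s) (ih s)
  | dNec _ _ ih => exact fun t _ => ih t

theorem DFDDerivNE.sat {φ : Fm V Pred ar} (h : DFDDerivNE φ) (M : GRModelNE V Pred ar)
    (s : M.W) : M.sat φ s := by
  induction h generalizing s with
  | ax h hφ => exact M.sat_of_axiom h hφ s
  | taut h _ => exact M.sat_of_taut h s
  | mp _ _ ihimp ih => exact (sat_imp _ _ _ _).1 (ihimp s) (ih s)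
  | dNec _ _ _ ih => exact fun t _ => ih t
  | oNec _ ih => exact ih (M.g s)

end Soundness

/-- **Soundness of the calculus DFD** (and of DFD^{≠∅}): every formula derivable in the proof
system DFD is true at every state of every general relational model of DFD; likewise, every
formula derivable in the restricted system DFD^{≠∅} is true at every state of every general
relational model of DFD^{≠∅}. -/
theorem DFD_soundness_general {V Pred : Type} [DecidableEq V] [Fintype V] [Inhabited V]
    {ar : Pred → ℕ} :
    (∀ φ : Fm V Pred ar, DFDDeriv φ →
      ∀ (M : GRModel V Pred ar) (s : M.W), M.toGRKripke.sat φ s) ∧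
    (∀ φ : Fm V Pred ar, DFDDerivNE φ →
      ∀ (M : GRModelNE V Pred ar) (s : M.W), M.toGRKripke.sat φ s) :=
  ⟨fun _ h => h.sat, fun _ h => h.sat⟩
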